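/- Fix j ∈ {1,…,L} and v ∈ P. Among any set of |Q_j| linearly independent eigenvectors of H^{(j)}(v), there exists exactly one vector u all of whose entries are negative or all of whose entries are positive. Furthermore, G^{(j)}(v) = −u/‖u‖₂ if u has all-negative entries, and G^{(j)}(v) = u/‖u‖₂ if u has all-positive entries. (Proposition 3 of the paper.) -/

import Mathlib

open Finset
open scoped Classical

namespace HetTS

noncomputable section

variable {K M : ℕ}

/-- Number of clients having access to arm `i`. -/
def Mi (S : Fin M → Finset (Fin K)) (i : Fin K) : ℕ :=
  (Finset.univ.filter fun m => i ∈ S m).card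

/-- The mean reward `μ_i(v)` of arm `i`: average of the means of arm `i` across the clients
having access to it. -/
def armMean (S : Fin M → Finset (Fin K)) (v : Fin M → Fin K → ℝ) (i : Fin K) : ℝ :=
  (1 / (Mi S i : ℝ)) * ∑ m ∈ Finset.univ.filter (fun m => i ∈ S m), v m i

/-- Arm `i` is the (unique) best arm of client `m` under instance `v`. -/
def isBest (S : Fin M → Finset (Fin K)) (v : Fin M → Fin K → ℝ) (m : Fin M) (i : Fin K) :
    Prop :=
  i ∈ S m ∧ ∀ j ∈ S m, j ≠ i → armMean S v j < armMean S v i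

/-- The set `P` of problem instances having a unique best arm at each client. -/
def PSet (S : Fin M → Finset (Fin K)) : Set (Fin M → Fin K → ℝ) :=
  {v | ∀ m, ∃ i, isBest S v m i}

/-- The set of alternative instances `Alt(v)`: instances in `P` whose tuple of best arms
differs from that of `v`. -/
def AltSet (S : Fin M → Finset (Fin K)) (v : Fin M → Fin K → ℝ) :
    Set (Fin M → Fin K → ℝ) :=
  {v' | v' ∈ PSet S ∧ ¬ ∀ (m : Fin M) (i : Fin K), isBest S v m i ↔ isBest S v' m i}

/-- The set `Γ` of allocations: families `(ω_{i,m})_{m, i ∈ S_m}` of nonnegative weights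
summing to one for each client (represented as functions vanishing off the support). -/
def Gam (S : Fin M → Finset (Fin K)) : Set (Fin M → Fin K → ℝ) :=
  {ω | (∀ m, ∀ i ∈ S m, 0 ≤ ω m i) ∧ (∀ m, ∑ i ∈ S m, ω m i = 1) ∧
    ∀ m, ∀ i, i ∉ S m → ω m i = 0}

/-- `g_v(ω)`, the inner infimum over alternative instances. -/
def gfun (S : Fin M → Finset (Fin K)) (v ω : Fin M → Fin K → ℝ) : ℝ :=
  sInf {x | ∃ v' ∈ AltSet S v,
    x = ∑ m : Fin M, ∑ i ∈ S m, ω m i * (v m i - v' m i) ^ 2 / 2}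

/-- The gap `Δ_i(v)`. -/
def Delta (S : Fin M → Finset (Fin K)) (v : Fin M → Fin K → ℝ) (i : Fin K) : ℝ :=
  sInf {x | ∃ m : Fin M, i ∈ S m ∧
    x = |armMean S v i - sSup {y | ∃ j ∈ S m, j ≠ i ∧ y = armMean S v j}|}

/-- The denominator `(1/M_i²) ∑_{m : i ∈ S_m} 1/ω_{i,m}`. -/
def armDenom (S : Fin M → Finset (Fin K)) (ω : Fin M → Fin K → ℝ) (i : Fin K) : ℝ :=
  (1 / (Mi S i : ℝ) ^ 2) * ∑ m ∈ Finset.univ.filter (fun m => i ∈ S m), 1 / ω m i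

/-- The simplified objective `g̃_v(ω)`. -/
def gtilde (S : Fin M → Finset (Fin K)) (v ω : Fin M → Fin K → ℝ) : ℝ :=
  if ∃ m, ∃ i ∈ S m, ω m i = 0 then 0
  else sInf {x | ∃ i : Fin K, x = (Delta S v i) ^ 2 / 2 / armDenom S ω i}

/-- The relation `R` on arms: two arms are related if some client has access to both. -/
def armRel (S : Fin M → Finset (Fin K)) (i₁ i₂ : Fin K) : Prop :=
  ∃ m, i₁ ∈ S m ∧ i₂ ∈ S m

/-- The equivalence class `Q` of arm `i` under the smallest equivalence relation
containing `R`. -/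
def armClass (S : Fin M → Finset (Fin K)) (i : Fin K) : Set (Fin K) :=
  {i' | Relation.EqvGen (armRel S) i i'}

/-- Same equivalence class, as a `Finset`. -/
def classFinset (S : Fin M → Finset (Fin K)) (i : Fin K) : Finset (Fin K) :=
  Finset.univ.filter fun i' => Relation.EqvGen (armRel S) i i'

/-- The per-class objective `g̃_v^{(j)}(ω)` where `Q` is the `j`-th equivalence class. -/
def gtildeC (S : Fin M → Finset (Fin K)) (v : Fin M → Fin K → ℝ) (Q : Set (Fin K))
    (ω : Fin M → Fin K → ℝ) : ℝ :=
  if ∃ m, ∃ i ∈ S m, i ∈ Q ∧ ω m i = 0 then 0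
  else sInf {x | ∃ i ∈ Q, x = (Delta S v i) ^ 2 / armDenom S ω i}

/-- `ω` is a common solution: it simultaneously attains `max_{ω'∈Γ} g̃_v(ω')` and
`max_{ω'∈Γ} g̃_v^{(j)}(ω')` for every equivalence class `Q_j`. -/
def IsCommonSol (S : Fin M → Finset (Fin K)) (v ω : Fin M → Fin K → ℝ) : Prop :=
  ω ∈ Gam S ∧ (∀ ω' ∈ Gam S, gtilde S v ω' ≤ gtilde S v ω) ∧
    ∀ i : Fin K, ∀ ω' ∈ Gam S,
      gtildeC S v (armClass S i) ω' ≤ gtildeC S v (armClass S i) ω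

/-- The balanced condition. -/
def BalancedCond (S : Fin M → Finset (Fin K)) (ω : Fin M → Fin K → ℝ) : Prop :=
  ∀ m₁ m₂ : Fin M, ∀ i₁ i₂ : Fin K, i₁ ∈ S m₁ → i₂ ∈ S m₁ → i₁ ∈ S m₂ → i₂ ∈ S m₂ →
    ω m₁ i₁ / ω m₁ i₂ = ω m₂ i₁ / ω m₂ i₂

/-- The pseudo-balanced condition for instance `v`. -/
def PseudoBalancedCond (S : Fin M → Finset (Fin K)) (v ω : Fin M → Fin K → ℝ) : Prop :=
  ∀ i₁ i₂ : Fin K, Relation.EqvGen (armRel S) i₁ i₂ →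
    (Delta S v i₁) ^ 2 / armDenom S ω i₁ = (Delta S v i₂) ^ 2 / armDenom S ω i₂

/-- The matrix `H(v)` (restricted to a class it gives `H^{(j)}(v)`). -/
def Hmat (S : Fin M → Finset (Fin K)) (v : Fin M → Fin K → ℝ) (i₁ i₂ : Fin K) : ℝ :=
  (1 / ((Delta S v i₁) ^ 2 * (Mi S i₁ : ℝ) ^ 2)) *
    ((Finset.univ.filter fun m => i₁ ∈ S m ∧ i₂ ∈ S m).card : ℝ)

/-! ### Auxiliary lemmas -/

section Aux

variable {S : Fin M → Finset (Fin K)}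

lemma armRel_symm' {i j : Fin K} (h : armRel S i j) : armRel S j i := by
  obtain ⟨m, h1, h2⟩ := h; exact ⟨m, h2, h1⟩

lemma eqvGen_to_rtg {i j : Fin K} (h : Relation.EqvGen (armRel S) i j) :
    Relation.ReflTransGen (armRel S) i j := by
  have hsymm : Symmetric (Relation.ReflTransGen (armRel S)) :=
    by haveI : Std.Symm (armRel S) := ⟨fun _ _ h => armRel_symm' h⟩; exact fun a b h => Std.Symm.symm a b h
  induction h with
  | rel x y h => exact Relation.ReflTransGen.single h
  | refl x => exact Relation.ReflTransGen.refl
  | symm x y h ih => exact hsymm ih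
  | trans x y z h1 h2 ih1 ih2 => exact ih1.trans ih2

lemma mem_classFinset {i₀ i : Fin K} :
    i ∈ classFinset S i₀ ↔ Relation.EqvGen (armRel S) i₀ i := by
  simp [classFinset]

lemma self_mem_classFinset (i₀ : Fin K) : i₀ ∈ classFinset S i₀ :=
  mem_classFinset.2 (Relation.EqvGen.refl i₀)

lemma classFinset_step {i₀ i j : Fin K} (hi : i ∈ classFinset S i₀)
    (hr : armRel S i j) : j ∈ classFinset S i₀ :=
  mem_classFinset.2 ((mem_classFinset.1 hi).trans _ _ _ (Relation.EqvGen.rel _ _ hr))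

lemma classFinset_client {i₀ i j : Fin K} {m : Fin M} (hi : i ∈ classFinset S i₀)
    (him : i ∈ S m) (hjm : j ∈ S m) : j ∈ classFinset S i₀ :=
  classFinset_step hi ⟨m, him, hjm⟩

lemma Mi_pos {i : Fin K} (h : ∃ m, i ∈ S m) : 0 < Mi S i := by
  obtain ⟨m, hm⟩ := h
  exact Finset.card_pos.2 ⟨m, by simp [hm]⟩

/-- helper facts about `sInf` of sets of the form `{x | ∃ i ∈ s, x = f i}`. -/
lemma set_eq_image {α : Type*} (s : Set α) (f : α → ℝ) :
    {x | ∃ i ∈ s, x = f i} = f '' s := by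
  ext x; simp [Set.mem_image, eq_comm]

lemma csInf_le_of_mem_finite {s : Set ℝ} (hfin : s.Finite) {x : ℝ} (hx : x ∈ s) :
    sInf s ≤ x := csInf_le hfin.bddBelow hx

end Aux

section DeltaPos

variable {S : Fin M → Finset (Fin K)} {v : Fin M → Fin K → ℝ}

lemma Delta_pos (hv : v ∈ PSet S) (hS : ∀ m, 2 ≤ (S m).card) {i : Fin K}
    (hcovi : ∃ m, i ∈ S m) : 0 < Delta S v i := by
  classical
  set f : Fin M → ℝ := fun m =>
    |armMean S v i - sSup {y | ∃ j ∈ S m, j ≠ i ∧ y = armMean S v j}| with hf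
  have hsub : {x | ∃ m : Fin M, i ∈ S m ∧
      x = |armMean S v i - sSup {y | ∃ j ∈ S m, j ≠ i ∧ y = armMean S v j}|} ⊆
      Set.range f := by
    rintro x ⟨m, _, rfl⟩; exact ⟨m, rfl⟩
  have hfin := (Set.finite_range f).subset hsub
  obtain ⟨m₀, hm₀⟩ := hcovi
  have hne : ({x | ∃ m : Fin M, i ∈ S m ∧
      x = |armMean S v i - sSup {y | ∃ j ∈ S m, j ≠ i ∧ y = armMean S v j}|}).Nonempty :=
    ⟨f m₀, m₀, hm₀, rfl⟩
  have hmem := hne.csInf_mem hfin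
  obtain ⟨m, him, heq⟩ := hmem
  rw [Delta, heq]
  -- now show the absolute value is positive
  have hY : {y | ∃ j ∈ S m, j ≠ i ∧ y = armMean S v j} =
      (armMean S v) '' {j | j ∈ S m ∧ j ≠ i} := by
    ext y; constructor
    · rintro ⟨j, hj, hji, rfl⟩; exact ⟨j, ⟨hj, hji⟩, rfl⟩
    · rintro ⟨j, ⟨hj, hji⟩, rfl⟩; exact ⟨j, hj, hji, rfl⟩
  have hYfin : ({y | ∃ j ∈ S m, j ≠ i ∧ y = armMean S v j}).Finite := by
    rw [hY]; exact (Set.toFinite _).image _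
  obtain ⟨j₁, hj₁m, hj₁i⟩ := Finset.exists_mem_ne (lt_of_lt_of_le one_lt_two (hS m)) i
  have hYne : ({y | ∃ j ∈ S m, j ≠ i ∧ y = armMean S v j}).Nonempty :=
    ⟨armMean S v j₁, j₁, hj₁m, hj₁i, rfl⟩
  have hsSup := hYne.csSup_mem hYfin
  obtain ⟨js, hjsm, hjsi, hjs⟩ := hsSup
  obtain ⟨b, hbm, hbbest⟩ := hv m
  have hne2 : armMean S v i ≠ sSup {y | ∃ j ∈ S m, j ≠ i ∧ y = armMean S v j} := by
    by_cases hbi : b = i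
    · subst hbi
      have := hbbest js hjsm hjsi
      rw [hjs]; exact ne_of_gt this
    · have h1 : armMean S v i < armMean S v b := hbbest i him (fun h => hbi h.symm)
      have h2 : armMean S v b ≤ sSup {y | ∃ j ∈ S m, j ≠ i ∧ y = armMean S v j} :=
        le_csSup hYfin.bddAbove ⟨b, hbm, hbi, rfl⟩
      exact ne_of_lt (lt_of_lt_of_le h1 h2)
  have := sub_ne_zero.2 hne2
  exact abs_pos.2 this

end DeltaPos

section Perturb

variable {S : Fin M → Finset (Fin K)}

lemma armDenom_congr {ω₁ ω₂ : Fin M → Fin K → ℝ} {i : Fin K}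
    (h : ∀ m, i ∈ S m → ω₁ m i = ω₂ m i) : armDenom S ω₁ i = armDenom S ω₂ i := by
  unfold armDenom
  congr 1
  exact Finset.sum_congr rfl fun m hm => by rw [h m (Finset.mem_filter.1 hm).2]

lemma armDenom_pos {ω : Fin M → Fin K → ℝ} {i : Fin K} (hcovi : ∃ m, i ∈ S m)
    (hpos : ∀ m, i ∈ S m → 0 < ω m i) : 0 < armDenom S ω i := by
  unfold armDenom
  have hM : (0:ℝ) < (Mi S i : ℝ) := by exact_mod_cast Mi_pos hcovi
  apply mul_pos (by positivity)
  apply Finset.sum_pos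
  · intro m hm
    have := hpos m (Finset.mem_filter.1 hm).2
    positivity
  · obtain ⟨m, hm⟩ := hcovi
    exact ⟨m, by simp [hm]⟩

lemma armDenom_lt {ω₁ ω₂ : Fin M → Fin K → ℝ} {i : Fin K}
    (h : ∀ m, i ∈ S m → 0 < ω₁ m i ∧ ω₁ m i ≤ ω₂ m i)
    {m₀ : Fin M} (hm₀ : i ∈ S m₀) (hstrict : ω₁ m₀ i < ω₂ m₀ i) :
    armDenom S ω₂ i < armDenom S ω₁ i := by
  unfold armDenom
  have hM : (0:ℝ) < (Mi S i : ℝ) := by exact_mod_cast Mi_pos ⟨m₀, hm₀⟩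
  apply mul_lt_mul_of_pos_left _ (by positivity)
  apply Finset.sum_lt_sum
  · intro m hm
    have hh := h m (Finset.mem_filter.1 hm).2
    exact one_div_le_one_div_of_le hh.1 hh.2
  · refine ⟨m₀, by simp [hm₀], ?_⟩
    exact one_div_lt_one_div_of_lt (h m₀ hm₀).1 hstrict

lemma improve_one {v : Fin M → Fin K → ℝ} {c : ℝ} (hc : 0 < c)
    (hΔ : ∀ i : Fin K, 0 < Delta S v i)
    {ω : Fin M → Fin K → ℝ} (hω : ω ∈ Gam S) (hpos : ∀ m, ∀ j ∈ S m, 0 < ω m j)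
    {W : Finset (Fin K)} (hW : ∀ j ∈ W, c < Delta S v j ^ 2 / armDenom S ω j)
    {i : Fin K} (hiW : i ∉ W) (hri : c ≤ Delta S v i ^ 2 / armDenom S ω i)
    {m₀ : Fin M} (him : i ∈ S m₀) {p : Fin K} (hpW : p ∈ W) (hpm : p ∈ S m₀) :
    ∃ ω', ω' ∈ Gam S ∧ (∀ m, ∀ j ∈ S m, 0 < ω' m j) ∧
      (∀ j ∈ insert i W, c < Delta S v j ^ 2 / armDenom S ω' j) ∧
      (∀ j, j ∉ insert i W → ∀ m, ω' m j = ω m j) := by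
  have hip : i ≠ p := fun h => hiW (h ▸ hpW)
  set x := ω m₀ p with hx
  have hxpos : 0 < x := hpos m₀ p hpm
  have hdp : 0 < armDenom S ω p := armDenom_pos ⟨m₀, hpm⟩ (fun m hm => hpos m p hm)
  have hΔp := hΔ p
  have hgap : armDenom S ω p < Delta S v p ^ 2 / c := by
    rw [lt_div_iff₀ hc]
    have h2 := hW p hpW
    rw [lt_div_iff₀ hdp] at h2
    linarith
  set g := Delta S v p ^ 2 / c - armDenom S ω p with hg
  have hgpos : 0 < g := by rw [hg]; linarith
  set ε := min (x/2) (g * x^2 / 4) with hε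
  have hεpos : 0 < ε := lt_min (by linarith) (by positivity)
  have hεx2 : ε ≤ x/2 := min_le_left _ _
  have hεlt : ε < x := by linarith
  have hxε : 0 < x - ε := by linarith
  set ω' : Fin M → Fin K → ℝ := fun m j =>
    ω m j + (if m = m₀ ∧ j = i then ε else 0) - (if m = m₀ ∧ j = p then ε else 0) with hω'
  have hcoord : ∀ m j, j ≠ i → j ≠ p → ω' m j = ω m j := by
    intro m j hji hjp; simp [hω', hji, hjp]
  have hcoordi : ∀ m, ω' m i = ω m i + (if m = m₀ then ε else 0) := by
    intro m; simp [hω', hip]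
  have hcoordp : ∀ m, ω' m p = ω m p - (if m = m₀ then ε else 0) := by
    intro m; simp [hω', (Ne.symm hip)]
  have hpos' : ∀ m, ∀ j ∈ S m, 0 < ω' m j := by
    intro m j hj
    by_cases hji : j = i
    · subst hji
      rw [hcoordi]
      have := hpos m j hj
      split_ifs <;> linarith
    · by_cases hjp : j = p
      · subst hjp
        rw [hcoordp]
        have := hpos m j hj
        split_ifs with hmm
        · subst hmm; rw [← hx]; linarith
        · linarith
      · rw [hcoord m j hji hjp]; exact hpos m j hj
  obtain ⟨h1, h2, h3⟩ := hω
  have hGam' : ω' ∈ Gam S := by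
    refine ⟨fun m j hj => le_of_lt (hpos' m j hj), ?_, ?_⟩
    · intro m
      have hsplit : ∑ j ∈ S m, ω' m j = ∑ j ∈ S m, ω m j
          + ∑ j ∈ S m, (if m = m₀ ∧ j = i then ε else 0)
          - ∑ j ∈ S m, (if m = m₀ ∧ j = p then ε else 0) := by
        rw [← Finset.sum_add_distrib, ← Finset.sum_sub_distrib]
      rw [hsplit, h2 m]
      by_cases hm : m = m₀
      · subst hm
        simp [Finset.sum_ite_eq', him, hpm]
      · simp [hm]
    · intro m j hj
      have hji : ¬(m = m₀ ∧ j = i) := by rintro ⟨rfl, rfl⟩; exact hj him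
      have hjp : ¬(m = m₀ ∧ j = p) := by rintro ⟨rfl, rfl⟩; exact hj hpm
      simp [hω', hji, hjp, h3 m j hj]
  -- arm i strictly improves
  have hdi : armDenom S ω' i < armDenom S ω i := by
    refine armDenom_lt (fun m hm => ⟨hpos m i hm, ?_⟩) him ?_
    · rw [hcoordi]; split_ifs <;> linarith
    · rw [hcoordi]; simp [hεpos]
  have hri' : c < Delta S v i ^ 2 / armDenom S ω' i := by
    have hdi' : 0 < armDenom S ω' i := armDenom_pos ⟨m₀, him⟩ (fun m hm => hpos' m i hm)
    have hΔi := hΔ i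
    calc c ≤ Delta S v i ^ 2 / armDenom S ω i := hri
    _ < Delta S v i ^ 2 / armDenom S ω' i := by
        apply div_lt_div_of_pos_left (by positivity) hdi' hdi
  -- arm p stays above c
  have hsum : ∑ m ∈ Finset.univ.filter (fun m => p ∈ S m), 1 / ω' m p
      = (∑ m ∈ Finset.univ.filter (fun m => p ∈ S m), 1 / ω m p) + (1/(x - ε) - 1/x) := by
    have hcongr : ∀ m ∈ Finset.univ.filter (fun m => p ∈ S m),
        1/ω' m p = 1/ω m p + (if m = m₀ then 1/(x-ε) - 1/x else 0) := by
      intro m _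
      rw [hcoordp]
      by_cases hmm : m = m₀
      · subst hmm; rw [← hx]; simp
      · simp [hmm]
    rw [Finset.sum_congr rfl hcongr, Finset.sum_add_distrib]
    congr 1
    rw [Finset.sum_ite_eq']
    simp [hpm]
  have hdiff0 : 0 ≤ 1/(x-ε) - 1/x := by
    have := one_div_le_one_div_of_le hxε (by linarith : x - ε ≤ x)
    linarith
  have hdiff1 : 1/(x-ε) - 1/x ≤ g/2 := by
    have e : 1/(x-ε) - 1/x = ε/(x*(x-ε)) := by
      rw [div_sub_div _ _ (ne_of_gt hxε) (ne_of_gt hxpos),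
        show (1*x-(x-ε)*1) = ε by ring, mul_comm (x-ε) x]
    have hb : ε/(x*(x-ε)) ≤ (g * x^2/4)/(x^2/2) := by
      apply div_le_div₀ (by positivity) (min_le_right _ _) (by positivity)
      nlinarith
    have he : (g * x^2/4)/(x^2/2) = g/2 := by field_simp; ring
    rw [e]; rw [he] at hb; exact hb
  have hMp : (1:ℝ) ≤ (Mi S p : ℝ) := by exact_mod_cast Mi_pos ⟨m₀, hpm⟩
  have hfrac : 1/((Mi S p : ℝ))^2 ≤ 1 := by
    rw [div_le_one (by positivity)]; nlinarith
  have hdp' : armDenom S ω' p ≤ armDenom S ω p + (1/(x-ε)-1/x) := by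
    unfold armDenom
    rw [hsum, mul_add]
    have hmul : 1/((Mi S p : ℝ))^2 * (1/(x-ε)-1/x) ≤ 1/(x-ε)-1/x :=
      mul_le_of_le_one_left hdiff0 hfrac
    linarith
  have hrp' : c < Delta S v p ^ 2 / armDenom S ω' p := by
    have hdpos' : 0 < armDenom S ω' p := armDenom_pos ⟨m₀, hpm⟩ (fun m hm => hpos' m p hm)
    rw [lt_div_iff₀ hdpos']
    have hlt : armDenom S ω' p < Delta S v p ^ 2 / c := by
      have : armDenom S ω p = Delta S v p ^ 2 / c - g := by rw [hg]; ring
      rw [this] at hdp'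
      linarith
    rw [lt_div_iff₀ hc] at hlt
    linarith
  refine ⟨ω', hGam', hpos', ?_, ?_⟩
  · intro j hj
    rcases Finset.mem_insert.1 hj with rfl | hjW
    · exact hri'
    · by_cases hjp : j = p
      · subst hjp; exact hrp'
      · have hji : j ≠ i := fun h => hiW (h ▸ hjW)
        have : armDenom S ω' j = armDenom S ω j :=
          armDenom_congr (fun m _ => hcoord m j hji hjp)
        rw [this]
        exact hW j hjW
  · intro j hj m
    have hji : j ≠ i := fun h => hj (h ▸ Finset.mem_insert_self i W)
    have hjp : j ≠ p := fun h => hj (Finset.mem_insert_of_mem (h ▸ hpW))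
    exact hcoord m j hji hjp

end Perturb

/-- The set of arms of the class of `i₀` reachable within `n` steps from an arm whose
objective value exceeds `c`. -/
def goodSet (S : Fin M → Finset (Fin K)) (v ωt : Fin M → Fin K → ℝ) (i₀ : Fin K) (c : ℝ) :
    ℕ → Finset (Fin K)
  | 0 => (classFinset S i₀).filter fun j => c < Delta S v j ^ 2 / armDenom S ωt j
  | n+1 => goodSet S v ωt i₀ c n ∪
      (classFinset S i₀).filter fun j => ∃ p ∈ goodSet S v ωt i₀ c n, armRel S j p

section PseudoBal

variable {S : Fin M → Finset (Fin K)} {v ωt : Fin M → Fin K → ℝ} {i₀ : Fin K} {c : ℝ}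

lemma mem_armClass_iff {i : Fin K} : i ∈ armClass S i₀ ↔ i ∈ classFinset S i₀ := by
  simp [armClass, classFinset]

lemma goodSet_subset_class : ∀ n, goodSet S v ωt i₀ c n ⊆ classFinset S i₀ := by
  intro n
  induction n with
  | zero => exact Finset.filter_subset _ _
  | succ n ih => exact Finset.union_subset ih (Finset.filter_subset _ _)

lemma goodSet_mono {m n : ℕ} (h : m ≤ n) : goodSet S v ωt i₀ c m ⊆ goodSet S v ωt i₀ c n := by
  induction h with
  | refl => exact subset_rfl
  | step _ ih => exact ih.trans Finset.subset_union_left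

lemma goodSet_cover {i₁ : Fin K} (hi₁ : i₁ ∈ goodSet S v ωt i₀ c 0) :
    ∀ i ∈ classFinset S i₀, ∃ n, i ∈ goodSet S v ωt i₀ c n := by
  intro i hi
  have hQ1 : i₁ ∈ classFinset S i₀ := goodSet_subset_class 0 hi₁
  have h1 : Relation.ReflTransGen (armRel S) i₁ i :=
    eqvGen_to_rtg (((mem_classFinset.1 hQ1).symm _ _).trans _ _ _ (mem_classFinset.1 hi))
  clear hi
  induction h1 with
  | refl => exact ⟨0, hi₁⟩
  | tail hab hbc ih =>
      obtain ⟨n, hn⟩ := ih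
      refine ⟨n + 1, Finset.mem_union_right _ (Finset.mem_filter.2 ⟨?_, ?_⟩)⟩
      · exact classFinset_step (goodSet_subset_class n hn) hbc
      · exact ⟨_, hn, armRel_symm' hbc⟩

lemma goodSet_improve (hc : 0 < c) (hΔ : ∀ i : Fin K, 0 < Delta S v i)
    (hωtGam : ωt ∈ Gam S) (hpos : ∀ m, ∀ j ∈ S m, 0 < ωt m j)
    (hbound : ∀ j ∈ classFinset S i₀, c ≤ Delta S v j ^ 2 / armDenom S ωt j) :
    ∀ n, ∃ ω', ω' ∈ Gam S ∧ (∀ m, ∀ j ∈ S m, 0 < ω' m j) ∧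
      (∀ j ∈ goodSet S v ωt i₀ c n, c < Delta S v j ^ 2 / armDenom S ω' j) ∧
      (∀ j, j ∉ goodSet S v ωt i₀ c n → ∀ m, ω' m j = ωt m j) := by
  intro n
  induction n with
  | zero =>
      exact ⟨ωt, hωtGam, hpos, fun j hj => (Finset.mem_filter.1 hj).2, fun _ _ _ => rfl⟩
  | succ n ih =>
      have key : ∀ T : Finset (Fin K),
          T ⊆ goodSet S v ωt i₀ c (n+1) \ goodSet S v ωt i₀ c n →
          ∃ ω', ω' ∈ Gam S ∧ (∀ m, ∀ j ∈ S m, 0 < ω' m j) ∧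
            (∀ j ∈ goodSet S v ωt i₀ c n ∪ T,
              c < Delta S v j ^ 2 / armDenom S ω' j) ∧
            (∀ j, j ∉ goodSet S v ωt i₀ c n ∪ T → ∀ m, ω' m j = ωt m j) := by
        intro T
        induction T using Finset.induction_on with
        | empty =>
            intro _
            simpa using ih
        | @insert a T ha ihT =>
            intro hsub
            obtain ⟨ω₁, hGam₁, hpos₁, hgood₁, hcoord₁⟩ :=
              ihT ((Finset.subset_insert a T).trans hsub)
            have hamem := hsub (Finset.mem_insert_self a T)
            rw [Finset.mem_sdiff] at hamem
            obtain ⟨ha1, ha2⟩ := hamem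
            have ha3 : a ∈ (classFinset S i₀).filter
                fun j => ∃ p ∈ goodSet S v ωt i₀ c n, armRel S j p := by
              rcases Finset.mem_union.1 ha1 with h | h
              · exact absurd h ha2
              · exact h
            obtain ⟨haQ, p, hpGood, m₀, ham₀, hpm₀⟩ := Finset.mem_filter.1 ha3
            have haW : a ∉ goodSet S v ωt i₀ c n ∪ T := by
              rw [Finset.mem_union]; rintro (h | h); exacts [ha2 h, ha h]
            have hra : c ≤ Delta S v a ^ 2 / armDenom S ω₁ a := by
              have : armDenom S ω₁ a = armDenom S ωt a :=
                armDenom_congr (fun m _ => hcoord₁ a haW m)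
              rw [this]
              exact hbound a haQ
            obtain ⟨ω₂, hGam₂, hpos₂, hgood₂, hcoord₂⟩ :=
              improve_one hc hΔ hGam₁ hpos₁ hgood₁ haW hra ham₀
                (Finset.mem_union_left _ hpGood) hpm₀
            refine ⟨ω₂, hGam₂, hpos₂, ?_, ?_⟩
            · intro j hj
              apply hgood₂
              rwa [← Finset.union_insert]
            · intro j hj m
              rw [Finset.union_insert] at hj
              rw [hcoord₂ j hj m]
              exact hcoord₁ j (fun h => hj (Finset.mem_insert_of_mem h)) m
      have := key (goodSet S v ωt i₀ c (n+1) \ goodSet S v ωt i₀ c n) subset_rfl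
      rwa [Finset.union_sdiff_of_subset (goodSet_mono (Nat.le_succ n))] at this

lemma pseudo_balance (hS : ∀ m, 2 ≤ (S m).card) (hcov : ∀ i : Fin K, ∃ m, i ∈ S m)
    (hv : v ∈ PSet S) (hωt : IsCommonSol S v ωt)
    (hpos : ∀ m, ∀ j ∈ S m, 0 < ωt m j) :
    ∀ i ∈ classFinset S i₀,
      Delta S v i ^ 2 / armDenom S ωt i = gtildeC S v (armClass S i₀) ωt := by
  classical
  set c := gtildeC S v (armClass S i₀) ωt with hcdef
  have hΔ : ∀ i : Fin K, 0 < Delta S v i := fun i => Delta_pos hv hS (hcov i)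
  have heval : ∀ ω : Fin M → Fin K → ℝ, (∀ m, ∀ j ∈ S m, 0 < ω m j) →
      gtildeC S v (armClass S i₀) ω =
        sInf {x | ∃ i ∈ armClass S i₀, x = Delta S v i ^ 2 / armDenom S ω i} := by
    intro ω hp
    rw [gtildeC, if_neg]
    rintro ⟨m, i, hi, _, h0⟩
    exact (hp m i hi).ne' h0
  have hsetfin : ∀ ω : Fin M → Fin K → ℝ,
      {x | ∃ i ∈ armClass S i₀, x = Delta S v i ^ 2 / armDenom S ω i}.Finite := by
    intro ω
    apply (Set.finite_range (fun i => Delta S v i ^ 2 / armDenom S ω i)).subset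
    rintro x ⟨i, _, rfl⟩; exact ⟨i, rfl⟩
  have hsetne : ∀ ω : Fin M → Fin K → ℝ,
      {x | ∃ i ∈ armClass S i₀, x = Delta S v i ^ 2 / armDenom S ω i}.Nonempty :=
    fun ω => ⟨_, i₀, mem_armClass_iff.2 (self_mem_classFinset i₀), rfl⟩
  have hle : ∀ i ∈ classFinset S i₀, c ≤ Delta S v i ^ 2 / armDenom S ωt i := by
    intro i hi
    rw [hcdef, heval ωt hpos]
    exact csInf_le_of_mem_finite (hsetfin ωt) ⟨i, mem_armClass_iff.2 hi, rfl⟩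
  have hattain : ∃ i ∈ classFinset S i₀, c = Delta S v i ^ 2 / armDenom S ωt i := by
    obtain ⟨i, hi, he⟩ := (hsetne ωt).csInf_mem (hsetfin ωt)
    refine ⟨i, mem_armClass_iff.1 hi, ?_⟩
    rw [hcdef, heval ωt hpos]
    exact he
  have hcpos : 0 < c := by
    obtain ⟨i, _, he⟩ := hattain
    rw [he]
    exact div_pos (pow_pos (hΔ i) 2)
      (armDenom_pos (hcov i) (fun m hm => hpos m i hm))
  intro i hi
  by_contra hne
  have hgt : c < Delta S v i ^ 2 / armDenom S ωt i :=
    lt_of_le_of_ne (hle i hi) (fun h => hne h.symm)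
  have hi₁ : i ∈ goodSet S v ωt i₀ c 0 := Finset.mem_filter.2 ⟨hi, hgt⟩
  have hcover := goodSet_cover hi₁
  have hex : ∀ j : Fin K, ∃ n, j ∈ classFinset S i₀ → j ∈ goodSet S v ωt i₀ c n := by
    intro j
    by_cases hj : j ∈ classFinset S i₀
    · obtain ⟨n, hn⟩ := hcover j hj
      exact ⟨n, fun _ => hn⟩
    · exact ⟨0, fun h => absurd h hj⟩
  choose f hf using hex
  set N := Finset.univ.sup f with hN
  have hQsub : ∀ j ∈ classFinset S i₀, j ∈ goodSet S v ωt i₀ c N := fun j hj =>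
    goodSet_mono (Finset.le_sup (Finset.mem_univ j)) (hf j hj)
  obtain ⟨ω', hGam', hpos', hgood', -⟩ :=
    goodSet_improve hcpos hΔ hωt.1 hpos hle N
  have hub := hωt.2.2 i₀ ω' hGam'
  have hlb : c < gtildeC S v (armClass S i₀) ω' := by
    rw [heval ω' hpos']
    obtain ⟨i2, hi2, he2⟩ := (hsetne ω').csInf_mem (hsetfin ω')
    rw [he2]
    exact hgood' i2 (hQsub i2 (mem_armClass_iff.1 hi2))
  rw [← hcdef] at hub
  exact absurd hub (not_le.2 hlb)

end PseudoBal

section Linalg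

variable {S : Fin M → Finset (Fin K)} {v ωt : Fin M → Fin K → ℝ} {i₀ : Fin K}

/-- Sum-swap: the quadratic form of the count matrix against `G`. -/
lemma swap_sum (G : Fin K → ℝ) {i : Fin K} (hi : i ∈ classFinset S i₀) :
    ∑ i' ∈ classFinset S i₀,
        ((Finset.univ.filter fun m => i ∈ S m ∧ i' ∈ S m).card : ℝ) * G i'
      = ∑ m ∈ Finset.univ.filter (fun m => i ∈ S m), ∑ i' ∈ S m, G i' := by
  classical
  have hzero : ∀ i' ∈ (Finset.univ : Finset (Fin K)), i' ∉ classFinset S i₀ →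
      ((Finset.univ.filter fun m => i ∈ S m ∧ i' ∈ S m).card : ℝ) * G i' = 0 := by
    intro i' _ hi'
    have : (Finset.univ.filter fun m => i ∈ S m ∧ i' ∈ S m) = ∅ := by
      rw [Finset.filter_eq_empty_iff]
      rintro m _ ⟨h1, h2⟩
      exact hi' (classFinset_client hi h1 h2)
    rw [this]
    simp
  rw [Finset.sum_subset (Finset.subset_univ (classFinset S i₀)) hzero]
  have hterm : ∀ i' : Fin K,
      ((Finset.univ.filter fun m => i ∈ S m ∧ i' ∈ S m).card : ℝ) * G i'
        = ∑ m : Fin M, if i ∈ S m ∧ i' ∈ S m then G i' else 0 := by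
    intro i'
    rw [Finset.card_filter]
    push_cast
    rw [Finset.sum_mul]
    refine Finset.sum_congr rfl fun m _ => ?_
    split_ifs <;> simp
  calc ∑ i' : Fin K, ((Finset.univ.filter fun m => i ∈ S m ∧ i' ∈ S m).card : ℝ) * G i'
      = ∑ i' : Fin K, ∑ m : Fin M, if i ∈ S m ∧ i' ∈ S m then G i' else 0 :=
        Finset.sum_congr rfl fun i' _ => hterm i'
    _ = ∑ m : Fin M, ∑ i' : Fin K, if i ∈ S m ∧ i' ∈ S m then G i' else 0 :=
        Finset.sum_comm
    _ = ∑ m : Fin M, if i ∈ S m then ∑ i' ∈ S m, G i' else 0 := by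
        refine Finset.sum_congr rfl fun m _ => ?_
        by_cases him : i ∈ S m
        · simp only [him, true_and, if_true]
          rw [← Finset.sum_filter]
          congr 1
          simp [Finset.filter_mem_eq_inter]
        · simp [him]
    _ = ∑ m ∈ Finset.univ.filter (fun m => i ∈ S m), ∑ i' ∈ S m, G i' :=
        (Finset.sum_filter _ _).symm

/-- `G` restricted to the class is an eigenvector of `H` with eigenvalue `1/c`. -/
lemma eigen_G {G : Fin K → ℝ} {c : ℝ}
    (hΔ : ∀ i : Fin K, 0 < Delta S v i) (hcov : ∀ i : Fin K, ∃ m, i ∈ S m)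
    (hGpos : ∀ i, 0 < G i) (hGω : ∀ m : Fin M, ∀ i ∈ S m, ωt m i = G i / ∑ i' ∈ S m, G i')
    (hpos : ∀ m, ∀ j ∈ S m, 0 < ωt m j)
    (hbal : ∀ i ∈ classFinset S i₀, Delta S v i ^ 2 / armDenom S ωt i = c)
    (hcpos : 0 < c) :
    ∀ i ∈ classFinset S i₀,
      ∑ i' ∈ classFinset S i₀, Hmat S v i i' * G i' = (1/c) * G i := by
  intro i hi
  have hMi : (0:ℝ) < (Mi S i : ℝ) := by exact_mod_cast Mi_pos (hcov i)
  have hΔi := hΔ i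
  have hrw : ∀ i' ∈ classFinset S i₀, Hmat S v i i' * G i'
      = (1 / (Delta S v i ^ 2 * (Mi S i : ℝ) ^ 2)) *
        (((Finset.univ.filter fun m => i ∈ S m ∧ i' ∈ S m).card : ℝ) * G i') := by
    intro i' _
    rw [Hmat]
    ring
  rw [Finset.sum_congr rfl hrw, ← Finset.mul_sum, swap_sum G hi]
  have h1 : ∀ m ∈ Finset.univ.filter (fun m => i ∈ S m),
      ∑ i' ∈ S m, G i' = G i * (1 / ωt m i) := by
    intro m hm
    have him := (Finset.mem_filter.1 hm).2
    have hT : 0 < ∑ i' ∈ S m, G i' := Finset.sum_pos (fun j _ => hGpos j) ⟨i, him⟩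
    rw [hGω m i him, one_div_div, mul_comm, div_mul_cancel₀ _ (hGpos i).ne']
  rw [Finset.sum_congr rfl h1, ← Finset.mul_sum]
  have h2 : ∑ m ∈ Finset.univ.filter (fun m => i ∈ S m), 1 / ωt m i
      = (Mi S i : ℝ)^2 * armDenom S ωt i := by
    rw [armDenom]
    field_simp
  rw [h2]
  have hd : 0 < armDenom S ωt i :=
    armDenom_pos (hcov i) (fun m hm => hpos m i hm)
  have h3 : Delta S v i ^ 2 = c * armDenom S ωt i := by
    have h := hbal i hi
    rw [div_eq_iff hd.ne'] at h
    exact h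
  rw [h3]
  field_simp

lemma Hmat_nonneg (i i' : Fin K) : 0 ≤ Hmat S v i i' := by
  rw [Hmat]
  have h1 : (0:ℝ) ≤ 1 / (Delta S v i ^ 2 * (Mi S i : ℝ) ^ 2) := by positivity
  positivity

lemma Hmat_pos (hΔ : ∀ i : Fin K, 0 < Delta S v i) {i i' : Fin K} {m : Fin M}
    (h1 : i ∈ S m) (h2 : i' ∈ S m) : 0 < Hmat S v i i' := by
  rw [Hmat]
  have hMi : (0:ℝ) < (Mi S i : ℝ) := by exact_mod_cast Mi_pos ⟨m, h1⟩
  have hΔi := hΔ i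
  have hcard : 0 < ((Finset.univ.filter fun m => i ∈ S m ∧ i' ∈ S m).card : ℝ) := by
    have : (Finset.univ.filter fun m => i ∈ S m ∧ i' ∈ S m).Nonempty :=
      ⟨m, by simp [h1, h2]⟩
    exact_mod_cast Finset.card_pos.2 this
  positivity

/-- Symmetry of `H` with respect to the weighted inner product. -/
lemma inner_symm (hΔ : ∀ i : Fin K, 0 < Delta S v i) (hcov : ∀ i : Fin K, ∃ m, i ∈ S m)
    (x y : Fin K → ℝ) (Q : Finset (Fin K)) :
    ∑ i ∈ Q, (∑ i' ∈ Q, Hmat S v i i' * x i') *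
        (y i * (Delta S v i ^ 2 * (Mi S i : ℝ) ^ 2))
      = ∑ i ∈ Q, (∑ i' ∈ Q, Hmat S v i i' * y i') *
        (x i * (Delta S v i ^ 2 * (Mi S i : ℝ) ^ 2)) := by
  have key : ∀ a b : Fin K → ℝ,
      ∑ i ∈ Q, (∑ i' ∈ Q, Hmat S v i i' * a i') *
          (b i * (Delta S v i ^ 2 * (Mi S i : ℝ) ^ 2))
        = ∑ i ∈ Q, ∑ i' ∈ Q,
          ((Finset.univ.filter fun m => i ∈ S m ∧ i' ∈ S m).card : ℝ) * a i' * b i := by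
    intro a b
    refine Finset.sum_congr rfl fun i _ => ?_
    rw [Finset.sum_mul]
    refine Finset.sum_congr rfl fun i' _ => ?_
    rw [Hmat]
    have hMi : (0:ℝ) < (Mi S i : ℝ) := by exact_mod_cast Mi_pos (hcov i)
    have hΔi := hΔ i
    field_simp
  rw [key, key, Finset.sum_comm]
  refine Finset.sum_congr rfl fun i _ => Finset.sum_congr rfl fun i' _ => ?_
  have : (Finset.univ.filter fun m => i' ∈ S m ∧ i ∈ S m)
      = (Finset.univ.filter fun m => i ∈ S m ∧ i' ∈ S m) := by
    apply Finset.filter_congr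
    intro m _
    simp [and_comm]
  rw [this]
  ring

/-- A nonnegative eigenvector of `H` on the class vanishing somewhere vanishes identically. -/
lemma eig_zero_propagate (hΔ : ∀ i : Fin K, 0 < Delta S v i)
    {u : Fin K → ℝ} {μ : ℝ}
    (hu0 : ∀ i ∈ classFinset S i₀, 0 ≤ u i)
    (heig : ∀ i ∈ classFinset S i₀,
      ∑ i' ∈ classFinset S i₀, Hmat S v i i' * u i' = μ * u i)
    {iz : Fin K} (hiz : iz ∈ classFinset S i₀) (hz : u iz = 0) :
    ∀ i ∈ classFinset S i₀, u i = 0 := by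
  have hstep : ∀ j ∈ classFinset S i₀, u j = 0 → ∀ j', armRel S j j' → u j' = 0 := by
    intro j hj hju j' hrel
    obtain ⟨m, hjm, hj'm⟩ := hrel
    have hj' : j' ∈ classFinset S i₀ := classFinset_client hj hjm hj'm
    have hsum := heig j hj
    rw [hju, mul_zero] at hsum
    have hterms : ∀ i' ∈ classFinset S i₀, 0 ≤ Hmat S v j i' * u i' :=
      fun i' hi' => mul_nonneg (Hmat_nonneg j i') (hu0 i' hi')
    have := (Finset.sum_eq_zero_iff_of_nonneg hterms).1 hsum j' hj'
    have hpos := Hmat_pos hΔ hjm hj'm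
    exact (mul_eq_zero.1 this).resolve_left hpos.ne'
  intro i hi
  have hrtg : Relation.ReflTransGen (armRel S) iz i :=
    eqvGen_to_rtg (((mem_classFinset.1 hiz).symm _ _).trans _ _ _ (mem_classFinset.1 hi))
  clear hi
  have : u i = 0 ∧ i ∈ classFinset S i₀ := by
    induction hrtg with
    | refl => exact ⟨hz, hiz⟩
    | tail hab hbc ih =>
        obtain ⟨hub, hbQ⟩ := ih
        refine ⟨hstep _ hbQ hub _ hbc, ?_⟩
        exact classFinset_step hbQ hbc
  exact this.1

/-- Any eigenvector of `H` on the class for the eigenvalue of the positive vector `G`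
is a multiple of `G`. -/
lemma eig_multiple (hΔ : ∀ i : Fin K, 0 < Delta S v i)
    {G w : Fin K → ℝ} {lam : ℝ} (hGpos : ∀ i, 0 < G i)
    (heigG : ∀ i ∈ classFinset S i₀,
      ∑ i' ∈ classFinset S i₀, Hmat S v i i' * G i' = lam * G i)
    (heigw : ∀ i ∈ classFinset S i₀,
      ∑ i' ∈ classFinset S i₀, Hmat S v i i' * w i' = lam * w i) :
    ∃ t : ℝ, ∀ i ∈ classFinset S i₀, w i = t * G i := by
  have hQne : (classFinset S i₀).Nonempty := ⟨i₀, self_mem_classFinset i₀⟩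
  obtain ⟨iz, hizQ, hmin⟩ := Finset.exists_min_image (classFinset S i₀)
    (fun i => w i / G i) hQne
  set t := w iz / G iz with ht
  set u : Fin K → ℝ := fun i => w i - t * G i with hu
  have hu0 : ∀ i ∈ classFinset S i₀, 0 ≤ u i := by
    intro i hi
    have := hmin i hi
    rw [le_div_iff₀ (hGpos i)] at this
    simp only [hu]
    linarith
  have heigu : ∀ i ∈ classFinset S i₀,
      ∑ i' ∈ classFinset S i₀, Hmat S v i i' * u i' = lam * u i := by
    intro i hi
    have hexp : ∀ i' ∈ classFinset S i₀, Hmat S v i i' * u i'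
        = Hmat S v i i' * w i' - t * (Hmat S v i i' * G i') := by
      intro i' _; simp only [hu]; ring
    rw [Finset.sum_congr rfl hexp, Finset.sum_sub_distrib, ← Finset.mul_sum,
      heigw i hi, heigG i hi]
    simp only [hu]
    ring
  have huz : u iz = 0 := by
    simp only [hu, ht]
    rw [div_mul_eq_mul_div, mul_div_assoc, div_self (hGpos iz).ne', mul_one, sub_self]
  have hzero := eig_zero_propagate hΔ hu0 heigu hizQ huz
  refine ⟨t, fun i hi => ?_⟩
  have := hzero i hi
  simp only [hu] at this
  linarith

end Linalg

/-- A linearly independent family of `Q.card` vectors supported on `Q` spans every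
vector supported on `Q`. -/
lemma span_eq_of_supported {Q : Finset (Fin K)} {n : ℕ} (hn : n = Q.card)
    (B : Fin n → (Fin K → ℝ)) (hsupp : ∀ k, ∀ i ∉ Q, B k i = 0)
    (hind : LinearIndependent ℝ B) {f : Fin K → ℝ} (hf : ∀ i ∉ Q, f i = 0) :
    ∃ a : Fin n → ℝ, ∑ k, a k • B k = f := by
  classical
  set fam : {x // x ∈ Q} → (Fin K → ℝ) := fun j => Pi.single (j : Fin K) 1 with hfam
  have hfam_ind : LinearIndependent ℝ fam := by
    have h1 := (Pi.basisFun ℝ (Fin K)).linearIndependent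
    have h2 := h1.comp (fun j : {x // x ∈ Q} => (j : Fin K)) Subtype.val_injective
    have he : fam = (⇑(Pi.basisFun ℝ (Fin K))) ∘ (fun j : {x // x ∈ Q} => (j : Fin K)) := by
      funext j; simp [hfam, Pi.basisFun_apply]
    rw [he]; exact h2
  have hrepr : ∀ g : Fin K → ℝ, (∀ i ∉ Q, g i = 0) →
      g ∈ Submodule.span ℝ (Set.range fam) := by
    intro g hg
    have hgsum : g = ∑ j ∈ Q.attach, g (j : Fin K) • fam j := by
      funext i
      rw [Finset.sum_apply]
      by_cases hi : i ∈ Q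
      · rw [Finset.sum_eq_single_of_mem (⟨i, hi⟩ : {x // x ∈ Q}) (Finset.mem_attach _ _)]
        · simp [hfam]
        · intro j _ hji
          have hne : i ≠ (j : Fin K) := fun h => hji (Subtype.ext h.symm)
          simp [hfam, Pi.single_apply, hne]
      · rw [hg i hi]
        refine (Finset.sum_eq_zero ?_).symm
        intro j _
        have hne : i ≠ (j : Fin K) := fun h => hi (h ▸ j.2)
        simp [hfam, Pi.single_apply, hne]
    rw [hgsum]
    exact Submodule.sum_mem _
      (fun j _ => Submodule.smul_mem _ _ (Submodule.subset_span ⟨j, rfl⟩))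
  have hle : Submodule.span ℝ (Set.range B) ≤ Submodule.span ℝ (Set.range fam) := by
    rw [Submodule.span_le]
    rintro x ⟨k, rfl⟩
    exact hrepr (B k) (hsupp k)
  have heq : Submodule.span ℝ (Set.range B) = Submodule.span ℝ (Set.range fam) := by
    apply Submodule.eq_of_le_of_finrank_eq hle
    rw [finrank_span_eq_card hind, finrank_span_eq_card hfam_ind,
      Fintype.card_fin, Fintype.card_coe, hn]
  have hfmem : f ∈ Submodule.span ℝ (Set.range B) := by rw [heq]; exact hrepr f hf
  exact (Submodule.mem_span_range_iff_exists_fun ℝ).1 hfmem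

/-- Proposition 3: among any `|Q_j|` linearly independent eigenvectors of `H^(j)(v)`,
exactly one has all-negative or all-positive entries, and `G^(j)(v)` equals its
(sign-corrected) normalisation. -/
theorem stmt12 (K M : ℕ) (hK : 2 ≤ K) (hM : 1 ≤ M) (S : Fin M → Finset (Fin K))
    (hS : ∀ m, 2 ≤ (S m).card) (hcov : ∀ i : Fin K, ∃ m, i ∈ S m)
    (v : Fin M → Fin K → ℝ) (hv : v ∈ PSet S)
    (ωt : Fin M → Fin K → ℝ) (hωt : IsCommonSol S v ωt)
    (G : Fin K → ℝ) (hGpos : ∀ i, 0 < G i)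
    (hGω : ∀ m : Fin M, ∀ i ∈ S m, ωt m i = G i / ∑ i' ∈ S m, G i')
    (hGnorm : ∀ i : Fin K, ∑ i' ∈ classFinset S i, G i' ^ 2 = 1)
    (i₀ : Fin K)
    (B : Fin (classFinset S i₀).card → Fin K → ℝ)
    (hsupp : ∀ k, ∀ i ∉ classFinset S i₀, B k i = 0)
    (heig : ∀ k, ∃ μ : ℝ, ∀ i ∈ classFinset S i₀,
      ∑ i' ∈ classFinset S i₀, Hmat S v i i' * B k i' = μ * B k i)
    (hind : LinearIndependent ℝ B) :
    (∃! k : Fin (classFinset S i₀).card,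
      (∀ i ∈ classFinset S i₀, B k i < 0) ∨ (∀ i ∈ classFinset S i₀, 0 < B k i)) ∧
    ∀ k : Fin (classFinset S i₀).card,
      ((∀ i ∈ classFinset S i₀, B k i < 0) →
        ∀ i ∈ classFinset S i₀,
          G i = -(B k i) / Real.sqrt (∑ i' ∈ classFinset S i₀, B k i' ^ 2)) ∧
      ((∀ i ∈ classFinset S i₀, 0 < B k i) →
        ∀ i ∈ classFinset S i₀,
          G i = B k i / Real.sqrt (∑ i' ∈ classFinset S i₀, B k i' ^ 2)) := by
  classical
  have hΔ : ∀ i : Fin K, 0 < Delta S v i := fun i => Delta_pos hv hS (hcov i)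
  have hpos : ∀ m, ∀ j ∈ S m, 0 < ωt m j := by
    intro m j hj
    rw [hGω m j hj]
    exact div_pos (hGpos j) (Finset.sum_pos (fun x _ => hGpos x) ⟨j, hj⟩)
  have hi₀Q : i₀ ∈ classFinset S i₀ := self_mem_classFinset i₀
  have hQne : (classFinset S i₀).Nonempty := ⟨i₀, hi₀Q⟩
  set c := gtildeC S v (armClass S i₀) ωt with hcdef
  have hbal : ∀ i ∈ classFinset S i₀, Delta S v i ^ 2 / armDenom S ωt i = c :=
    pseudo_balance hS hcov hv hωt hpos
  have hcpos : 0 < c := by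
    have hb := hbal i₀ hi₀Q
    rw [← hb]
    exact div_pos (pow_pos (hΔ i₀) 2) (armDenom_pos (hcov i₀) (fun m hm => hpos m i₀ hm))
  have heigG : ∀ i ∈ classFinset S i₀,
      ∑ i' ∈ classFinset S i₀, Hmat S v i i' * G i' = (1/c) * G i :=
    eigen_G hΔ hcov hGpos hGω hpos hbal hcpos
  choose μ hμ using heig
  have hMiR : ∀ i : Fin K, (0:ℝ) < (Mi S i : ℝ) := fun i => by
    exact_mod_cast Mi_pos (hcov i)
  -- orthogonality against G for eigenvalues different from 1/c
  have horth : ∀ k, μ k ≠ 1/c →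
      ∑ i ∈ classFinset S i₀,
        B k i * (G i * (Delta S v i ^ 2 * (Mi S i : ℝ)^2)) = 0 := by
    intro k hk
    have hsym := inner_symm (S := S) (v := v) hΔ hcov (B k) G (classFinset S i₀)
    have hL : ∑ i ∈ classFinset S i₀, (∑ i' ∈ classFinset S i₀, Hmat S v i i' * B k i') *
        (G i * (Delta S v i ^ 2 * (Mi S i : ℝ)^2))
        = μ k * ∑ i ∈ classFinset S i₀,
            B k i * (G i * (Delta S v i ^ 2 * (Mi S i : ℝ)^2)) := by
      rw [Finset.mul_sum]
      refine Finset.sum_congr rfl fun i hi => ?_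
      rw [hμ k i hi]; ring
    have hR : ∑ i ∈ classFinset S i₀, (∑ i' ∈ classFinset S i₀, Hmat S v i i' * G i') *
        (B k i * (Delta S v i ^ 2 * (Mi S i : ℝ)^2))
        = (1/c) * ∑ i ∈ classFinset S i₀,
            B k i * (G i * (Delta S v i ^ 2 * (Mi S i : ℝ)^2)) := by
      rw [Finset.mul_sum]
      refine Finset.sum_congr rfl fun i hi => ?_
      rw [heigG i hi]; ring
    rw [hL, hR] at hsym
    have h2 : (μ k - 1/c) * ∑ i ∈ classFinset S i₀,
        B k i * (G i * (Delta S v i ^ 2 * (Mi S i : ℝ)^2)) = 0 := by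
      rw [sub_mul, hsym]; ring
    rcases mul_eq_zero.1 h2 with h | h
    · exact absurd (by linarith [sub_eq_zero.1 h] : μ k = 1/c) hk
    · exact h
  -- sign-definite eigenvectors are nonzero multiples of G on the class
  have hsign : ∀ k, ((∀ i ∈ classFinset S i₀, B k i < 0) ∨
      (∀ i ∈ classFinset S i₀, 0 < B k i)) →
      ∃ t, t ≠ 0 ∧ ∀ i ∈ classFinset S i₀, B k i = t * G i := by
    intro k hk
    have hterm : ∀ i ∈ classFinset S i₀,
        0 < G i * (Delta S v i ^ 2 * (Mi S i : ℝ)^2) := by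
      intro i _
      have h1 := hΔ i; have h2 := hMiR i; have h3 := hGpos i
      positivity
    have hμk : μ k = 1/c := by
      by_contra hne
      have h0 := horth k hne
      rcases hk with hneg | hposk
      · have hlt : ∑ i ∈ classFinset S i₀,
            B k i * (G i * (Delta S v i ^ 2 * (Mi S i : ℝ)^2)) < 0 :=
          Finset.sum_neg (fun i hi => mul_neg_of_neg_of_pos (hneg i hi) (hterm i hi)) hQne
        exact absurd h0 hlt.ne
      · have hlt : 0 < ∑ i ∈ classFinset S i₀,
            B k i * (G i * (Delta S v i ^ 2 * (Mi S i : ℝ)^2)) :=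
          Finset.sum_pos (fun i hi => mul_pos (hposk i hi) (hterm i hi)) hQne
        exact absurd h0 hlt.ne'
    obtain ⟨t, ht⟩ := eig_multiple hΔ hGpos heigG (fun i hi => by rw [hμ k i hi, hμk])
    refine ⟨t, ?_, ht⟩
    intro ht0
    have hB0 : B k i₀ = 0 := by rw [ht i₀ hi₀Q, ht0]; ring
    rcases hk with hneg | hposk
    · exact absurd hB0 (hneg i₀ hi₀Q).ne
    · exact absurd hB0 (hposk i₀ hi₀Q).ne'
  -- G (restricted to the class) lies in the span of B
  set Gq : Fin K → ℝ := fun i => if i ∈ classFinset S i₀ then G i else 0 with hGq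
  obtain ⟨a, haB⟩ := span_eq_of_supported rfl B hsupp hind
    (f := Gq) (fun i hi => by simp [hGq, hi])
  have hGqval : ∀ i : Fin K, ∑ k, a k * B k i = Gq i := by
    intro i
    have := congrFun haB i
    simpa using this
  have hGq_eig : ∀ i ∈ classFinset S i₀,
      ∑ i' ∈ classFinset S i₀, Hmat S v i i' * Gq i' = (1/c) * Gq i := by
    intro i hi
    have he : ∀ i' ∈ classFinset S i₀, Hmat S v i i' * Gq i' = Hmat S v i i' * G i' := by
      intro i' hi'; simp [hGq, hi']
    rw [Finset.sum_congr rfl he, heigG i hi]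
    simp [hGq, hi]
  have hswap : ∀ i ∈ classFinset S i₀,
      ∑ k, a k * (μ k * B k i) = (1/c) * ∑ k, a k * B k i := by
    intro i hi
    calc ∑ k, a k * (μ k * B k i)
        = ∑ k, a k * ∑ i' ∈ classFinset S i₀, Hmat S v i i' * B k i' :=
          Finset.sum_congr rfl fun k _ => by rw [hμ k i hi]
      _ = ∑ k, ∑ i' ∈ classFinset S i₀, Hmat S v i i' * (a k * B k i') := by
          refine Finset.sum_congr rfl fun k _ => ?_
          rw [Finset.mul_sum]
          exact Finset.sum_congr rfl fun i' _ => by ring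
      _ = ∑ i' ∈ classFinset S i₀, ∑ k, Hmat S v i i' * (a k * B k i') := Finset.sum_comm
      _ = ∑ i' ∈ classFinset S i₀, Hmat S v i i' * Gq i' := by
          refine Finset.sum_congr rfl fun i' _ => ?_
          rw [← Finset.mul_sum, hGqval i']
      _ = (1/c) * Gq i := hGq_eig i hi
      _ = (1/c) * ∑ k, a k * B k i := by rw [hGqval i]
  have hzero : ∑ k, (a k * (μ k - 1/c)) • B k = 0 := by
    funext i
    simp only [Finset.sum_apply, Pi.smul_apply, smul_eq_mul, Pi.zero_apply]
    by_cases hi : i ∈ classFinset S i₀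
    · have e : ∀ k : Fin (classFinset S i₀).card, a k * (μ k - 1/c) * B k i
          = a k * (μ k * B k i) - (1/c) * (a k * B k i) := fun k => by ring
      rw [Finset.sum_congr rfl (fun k _ => e k), Finset.sum_sub_distrib, hswap i hi,
        ← Finset.mul_sum]
      ring
    · refine Finset.sum_eq_zero fun k _ => ?_
      rw [hsupp k i hi]
      ring
  have hcoef := Fintype.linearIndependent_iff.1 hind _ hzero
  have hex : ∃ k, a k ≠ 0 := by
    by_contra h
    push_neg at h
    have h0 := hGqval i₀
    rw [Finset.sum_eq_zero (fun k _ => by rw [h k]; ring)] at h0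
    have : Gq i₀ = G i₀ := by simp [hGq, hi₀Q]
    rw [this] at h0
    exact (hGpos i₀).ne h0
  obtain ⟨k₀, hk₀⟩ := hex
  have hμk₀ : μ k₀ = 1/c := by
    rcases mul_eq_zero.1 (hcoef k₀) with h | h
    · exact absurd h hk₀
    · linarith [sub_eq_zero.1 h]
  obtain ⟨t₀, ht₀⟩ := eig_multiple hΔ hGpos heigG (fun i hi => by rw [hμ k₀ i hi, hμk₀])
  have ht₀ne : t₀ ≠ 0 := by
    intro h
    apply hind.ne_zero k₀
    funext i
    by_cases hi : i ∈ classFinset S i₀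
    · rw [ht₀ i hi, h]; simp
    · rw [hsupp k₀ i hi]; simp
  have hk₀sign : (∀ i ∈ classFinset S i₀, B k₀ i < 0) ∨
      (∀ i ∈ classFinset S i₀, 0 < B k₀ i) := by
    rcases lt_or_gt_of_ne ht₀ne with h | h
    · left; intro i hi; rw [ht₀ i hi]; exact mul_neg_of_neg_of_pos h (hGpos i)
    · right; intro i hi; rw [ht₀ i hi]; exact mul_pos h (hGpos i)
  constructor
  · refine ⟨k₀, hk₀sign, ?_⟩
    intro k hk
    by_contra hne
    obtain ⟨t, htne, ht⟩ := hsign k hk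
    have hdep : ∑ j, (fun j => if j = k then t₀ else if j = k₀ then -t else 0) j • B j
        = 0 := by
      have hsplit : ∀ j, ((if j = k then t₀ else if j = k₀ then -t else 0) • B j)
          = (if j = k then t₀ • B k else 0) + (if j = k₀ then (-t) • B k₀ else 0) := by
        intro j
        by_cases h1 : j = k
        · subst h1
          rw [if_pos rfl, if_pos rfl, if_neg hne, add_zero]
        · rw [if_neg h1, if_neg h1, zero_add]
          by_cases h2 : j = k₀
          · subst h2; rw [if_pos rfl, if_pos rfl]
          · rw [if_neg h2, if_neg h2, zero_smul]
      rw [Finset.sum_congr rfl (fun j _ => hsplit j), Finset.sum_add_distrib,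
        Finset.sum_ite_eq', Finset.sum_ite_eq']
      simp only [Finset.mem_univ, if_pos]
      funext i
      by_cases hi : i ∈ classFinset S i₀
      · simp only [Pi.add_apply, Pi.smul_apply, smul_eq_mul, Pi.zero_apply]
        rw [ht i hi, ht₀ i hi]
        ring
      · simp only [Pi.add_apply, Pi.smul_apply, smul_eq_mul, Pi.zero_apply]
        rw [hsupp k i hi, hsupp k₀ i hi]
        ring
    have hall := Fintype.linearIndependent_iff.1 hind _ hdep
    have hkk := hall k
    rw [if_pos rfl] at hkk
    exact ht₀ne hkk
  · intro k
    constructor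
    · intro hneg i hi
      obtain ⟨t, htne, ht⟩ := hsign k (Or.inl hneg)
      have htneg : t < 0 := by
        have h1 := hneg i₀ hi₀Q
        rw [ht i₀ hi₀Q] at h1
        by_contra h
        push_neg at h
        nlinarith [hGpos i₀]
      have hsum : ∑ i' ∈ classFinset S i₀, B k i' ^ 2 = t^2 := by
        calc ∑ i' ∈ classFinset S i₀, B k i' ^ 2
            = ∑ i' ∈ classFinset S i₀, t^2 * G i' ^ 2 :=
              Finset.sum_congr rfl fun i' hi' => by rw [ht i' hi']; ring
          _ = t^2 * ∑ i' ∈ classFinset S i₀, G i' ^ 2 := by rw [Finset.mul_sum]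
          _ = t^2 := by rw [hGnorm i₀, mul_one]
      rw [ht i hi, hsum, Real.sqrt_sq_eq_abs, abs_of_neg htneg, neg_div_neg_eq,
        mul_comm t (G i), mul_div_assoc, div_self htne, mul_one]
    · intro hposk i hi
      obtain ⟨t, htne, ht⟩ := hsign k (Or.inr hposk)
      have htpos : 0 < t := by
        have h1 := hposk i₀ hi₀Q
        rw [ht i₀ hi₀Q] at h1
        by_contra h
        push_neg at h
        nlinarith [hGpos i₀]
      have hsum : ∑ i' ∈ classFinset S i₀, B k i' ^ 2 = t^2 := by
        calc ∑ i' ∈ classFinset S i₀, B k i' ^ 2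
            = ∑ i' ∈ classFinset S i₀, t^2 * G i' ^ 2 :=
              Finset.sum_congr rfl fun i' hi' => by rw [ht i' hi']; ring
          _ = t^2 * ∑ i' ∈ classFinset S i₀, G i' ^ 2 := by rw [Finset.mul_sum]
          _ = t^2 := by rw [hGnorm i₀, mul_one]
      rw [ht i hi, hsum, Real.sqrt_sq_eq_abs, abs_of_pos htpos,
        mul_comm t (G i), mul_div_assoc, div_self htne, mul_one]

end

end HetTS
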